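/- Let a ∈ [0,1], let Φ_a : M₂(ℂ) → M₂(ℂ) be the dephasing channel, let H = σ₃, let E ∈ ℝ, and let δ ∈ [0,2]. Then the supremum defining the Dobrushin curve F_E(δ) of Φ_a is unchanged when restricted to pairs whose second state lies in the (σ₁,σ₃)-plane: sup{‖Φ_a(ρ₀) − Φ_a(ρ₁)‖₁ : ρ₀, ρ₁ ∈ G_E, ‖ρ₀ − ρ₁‖₁ ≤ δ} = sup{‖Φ_a(ρ₀) − Φ_a(ρ₁)‖₁ : ρ₀, ρ₁ ∈ G_E, ‖ρ₀ − ρ₁‖₁ ≤ δ, tr(σ₂ρ₁) = 0}. -/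

import Mathlib

/-!
Conjugation by the diagonal unitary `diag(e^{iθ}, 1)` preserves density matrices, the energy
`tr(ρσ₃)` (it commutes with `σ₃`) and the trace norm, and it commutes with the dephasing channel,
which only damps the off-diagonal entries. It multiplies the off-diagonal entry `(ρ₁)₀₁` by
`e^{iθ}`, so `θ = -arg (ρ₁)₀₁` makes that entry real, i.e. `tr(σ₂ρ₁) = 0`. Hence every value
in the first set is attained by a pair in the second one, and the two sets coincide.
-/

open scoped ComplexOrder

/-- The trace norm `‖A‖₁ = tr √(A†A)` of a complex matrix. -/
noncomputable def traceNorm {d : ℕ} (A : Matrix (Fin d) (Fin d) ℂ) : ℝ :=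
  ((Matrix.posSemidef_conjTranspose_mul_self A).1.eigenvectorUnitary.1 *
    Matrix.diagonal ((fun x : ℝ => (x : ℂ)) ∘ (√·) ∘ (Matrix.posSemidef_conjTranspose_mul_self A).1.eigenvalues) *
    (star (Matrix.posSemidef_conjTranspose_mul_self A).1.eigenvectorUnitary :
      Matrix (Fin d) (Fin d) ℂ)).trace.re

/-- A density matrix: positive semidefinite with unit trace. -/
def IsDensity {d : ℕ} (ρ : Matrix (Fin d) (Fin d) ℂ) : Prop :=
  ρ.PosSemidef ∧ ρ.trace = 1

/-- The Pauli matrix `σ₁`. -/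
def pauli1 : Matrix (Fin 2) (Fin 2) ℂ := !![0, 1; 1, 0]

/-- The Pauli matrix `σ₂`. -/
def pauli2 : Matrix (Fin 2) (Fin 2) ℂ := !![0, -Complex.I; Complex.I, 0]

/-- The Pauli matrix `σ₃`. -/
def pauli3 : Matrix (Fin 2) (Fin 2) ℂ := !![1, 0; 0, -1]

/-- The dephasing channel with parameter `a`: the (complex-linear) map acting on the Pauli
basis by `α₀I + α₁σ₁ + α₂σ₂ + α₃σ₃ ↦ α₀I + a(α₁σ₁ + α₂σ₂) + α₃σ₃`. -/
def IsDephasing (a : ℝ) (Φ : Matrix (Fin 2) (Fin 2) ℂ →ₗ[ℂ] Matrix (Fin 2) (Fin 2) ℂ) : Prop :=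
  ∀ α : Fin 4 → ℝ,
    Φ ((α 0 : ℂ) • 1 + (α 1 : ℂ) • pauli1 + (α 2 : ℂ) • pauli2 + (α 3 : ℂ) • pauli3) =
      (α 0 : ℂ) • 1 + ((a : ℂ) * (α 1 : ℂ)) • pauli1 + ((a : ℂ) * (α 2 : ℂ)) • pauli2 +
        (α 3 : ℂ) • pauli3


open Matrix Complex Unitary
open scoped MatrixOrder

section UnitaryConj

variable {n 𝕜 : Type*} [Fintype n] [DecidableEq n] [RCLike 𝕜]

theorem Matrix.trace_conjStarAlgAut (U : unitaryGroup n 𝕜) (A : Matrix n n 𝕜) :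
    (conjStarAlgAut 𝕜 _ U A).trace = A.trace := by
  rw [conjStarAlgAut_apply, trace_mul_cycle, star_mul_self_of_mem U.2, one_mul]

theorem Matrix.trace_conjStarAlgAut_mul_of_commute (U : unitaryGroup n 𝕜) {H : Matrix n n 𝕜}
    (hUH : Commute (U : Matrix n n 𝕜) H) (A : Matrix n n 𝕜) :
    (conjStarAlgAut 𝕜 _ U A * H).trace = (A * H).trace := by
  have hH : conjStarAlgAut 𝕜 _ U H = H := by
    rw [conjStarAlgAut_apply, hUH.eq, mul_assoc, mul_star_self_of_mem U.2, mul_one]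
  rw [← trace_conjStarAlgAut U (A * H), map_mul, hH]

theorem Matrix.PosSemidef.conjStarAlgAut {A : Matrix n n 𝕜} (hA : A.PosSemidef)
    (U : unitaryGroup n 𝕜) : (conjStarAlgAut 𝕜 _ U A).PosSemidef :=
  hA.mul_mul_conjTranspose_same _

theorem Matrix.sqrt_conjStarAlgAut {A : Matrix n n 𝕜} (hA : A.PosSemidef)
    (U : unitaryGroup n 𝕜) :
    CFC.sqrt (conjStarAlgAut 𝕜 _ U A) = conjStarAlgAut 𝕜 _ U (CFC.sqrt A) :=
  CFC.sqrt_unique (by rw [← map_mul, CFC.sqrt_mul_sqrt_self A hA.nonneg])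
    ((CFC.sqrt_nonneg A).posSemidef.conjStarAlgAut U).nonneg

theorem Matrix.diagonal_mem_unitaryGroup {v : n → 𝕜} (hv : ∀ i, ‖v i‖ = 1) :
    diagonal v ∈ unitaryGroup n 𝕜 := by
  rw [mem_unitaryGroup_iff, star_eq_conjTranspose, diagonal_conjTranspose, diagonal_mul_diagonal,
    ← diagonal_one]
  congr 1
  funext i
  simp [RCLike.mul_conj, hv i]

end UnitaryConj

section UnitaryInvariance

variable {d : ℕ}

theorem IsDensity.conjStarAlgAut {ρ : Matrix (Fin d) (Fin d) ℂ} (hρ : IsDensity ρ)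
    (U : unitaryGroup (Fin d) ℂ) : IsDensity (conjStarAlgAut ℂ _ U ρ) :=
  ⟨hρ.1.conjStarAlgAut U, by rw [trace_conjStarAlgAut, hρ.2]⟩

theorem traceNorm_eq_re_trace_sqrt (M : Matrix (Fin d) (Fin d) ℂ) :
    traceNorm M = (CFC.sqrt (Mᴴ * M)).trace.re := by
  have hP := posSemidef_conjTranspose_mul_self M
  rw [CFC.sqrt_eq_real_sqrt _ hP.nonneg, cfcₙ_eq_cfc (hf0 := by simp), hP.1.cfc_eq]
  simp [traceNorm, IsHermitian.cfc]

theorem traceNorm_conjStarAlgAut (U : unitaryGroup (Fin d) ℂ) (A : Matrix (Fin d) (Fin d) ℂ) :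
    traceNorm (conjStarAlgAut ℂ _ U A) = traceNorm A := by
  have hA : (star A * A).PosSemidef := posSemidef_conjTranspose_mul_self A
  simp only [traceNorm_eq_re_trace_sqrt, ← star_eq_conjTranspose, ← map_star, ← map_mul,
    sqrt_conjStarAlgAut hA, trace_conjStarAlgAut]

end UnitaryInvariance

theorem eq_pauli_combination (A : Matrix (Fin 2) (Fin 2) ℂ) :
    A = ((A 0 0 + A 1 1) / 2) • 1 + ((A 0 1 + A 1 0) / 2) • pauli1 +
      (I * (A 0 1 - A 1 0) / 2) • pauli2 + ((A 0 0 - A 1 1) / 2) • pauli3 := by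
  ext i j
  fin_cases i <;> fin_cases j <;> simp [pauli1, pauli2, pauli3] <;> ring_nf <;>
    simp only [I_sq] <;> ring

theorem pauli3_eq_diagonal : pauli3 = diagonal ![1, -1] := by
  ext i j
  fin_cases i <;> fin_cases j <;> rfl

theorem trace_pauli2_mul_eq_zero {ρ : Matrix (Fin 2) (Fin 2) ℂ} (hρ : ρ.IsHermitian)
    (h : (ρ 0 1).im = 0) : (pauli2 * ρ).trace = 0 := by
  have h₁₀ : ρ 1 0 = ρ 0 1 := by rw [← hρ.apply 1 0, star_def, conj_eq_iff_im.mpr h]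
  simp [pauli2, trace_fin_two, vecMul, dotProduct, Fin.sum_univ_two, h₁₀]

section Dephasing

variable {a : ℝ} {Φ : Matrix (Fin 2) (Fin 2) ℂ →ₗ[ℂ] Matrix (Fin 2) (Fin 2) ℂ}

theorem IsDephasing.apply (hΦ : IsDephasing a Φ) (A : Matrix (Fin 2) (Fin 2) ℂ) :
    Φ A = !![A 0 0, a * A 0 1; a * A 1 0, A 1 1] := by
  have h₀ : Φ 1 = 1 := by simpa using hΦ ![1, 0, 0, 0]
  have h₁ : Φ pauli1 = (a : ℂ) • pauli1 := by simpa using hΦ ![0, 1, 0, 0]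
  have h₂ : Φ pauli2 = (a : ℂ) • pauli2 := by simpa using hΦ ![0, 0, 1, 0]
  have h₃ : Φ pauli3 = pauli3 := by simpa using hΦ ![0, 0, 0, 1]
  conv_lhs => rw [eq_pauli_combination A]
  simp only [map_add, map_smul, h₀, h₁, h₂, h₃]
  ext i j
  fin_cases i <;> fin_cases j <;> simp [pauli1, pauli2, pauli3] <;> ring_nf <;>
    simp only [I_sq] <;> ring

theorem IsDephasing.map_diagonal_mul_mul_diagonal (hΦ : IsDephasing a Φ) (v w : Fin 2 → ℂ)
    (A : Matrix (Fin 2) (Fin 2) ℂ) :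
    Φ (diagonal v * A * diagonal w) = diagonal v * Φ A * diagonal w := by
  rw [hΦ.apply, hΦ.apply]
  ext i j
  fin_cases i <;> fin_cases j <;> simp [diagonal_mul, mul_diagonal] <;> ring

end Dephasing

/-- `e^{iθσ₃/2}` up to the global phase `e^{iθ/2}`, which conjugation does not see. -/
noncomputable def phaseUnitary (θ : ℝ) : unitaryGroup (Fin 2) ℂ :=
  ⟨diagonal ![exp (θ * I), 1],
    diagonal_mem_unitaryGroup (by simp [Fin.forall_fin_two, norm_exp_ofReal_mul_I])⟩

theorem commute_phaseUnitary_pauli3 (θ : ℝ) :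
    Commute (phaseUnitary θ : Matrix (Fin 2) (Fin 2) ℂ) pauli3 := by
  rw [pauli3_eq_diagonal]
  exact commute_diagonal _ _

theorem conjStarAlgAut_phaseUnitary_apply_zero_one (θ : ℝ) (A : Matrix (Fin 2) (Fin 2) ℂ) :
    conjStarAlgAut ℂ _ (phaseUnitary θ) A 0 1 = exp (θ * I) * A 0 1 := by
  simp [phaseUnitary, star_eq_conjTranspose, diagonal_conjTranspose, diagonal_mul, mul_diagonal]

theorem IsDephasing.map_conjStarAlgAut_phaseUnitary {a : ℝ}
    {Φ : Matrix (Fin 2) (Fin 2) ℂ →ₗ[ℂ] Matrix (Fin 2) (Fin 2) ℂ} (hΦ : IsDephasing a Φ) (θ : ℝ)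
    (A : Matrix (Fin 2) (Fin 2) ℂ) :
    Φ (conjStarAlgAut ℂ _ (phaseUnitary θ) A) = conjStarAlgAut ℂ _ (phaseUnitary θ) (Φ A) := by
  simp only [conjStarAlgAut_apply, phaseUnitary, star_eq_conjTranspose, diagonal_conjTranspose,
    hΦ.map_diagonal_mul_mul_diagonal]

theorem exp_neg_arg_mul_I_mul (z : ℂ) : exp (-arg z * I) * z = ‖z‖ := by
  calc exp (-arg z * I) * z = exp (-arg z * I) * (‖z‖ * exp (arg z * I)) := by
        rw [norm_mul_exp_arg_mul_I]
    _ = ‖z‖ := by rw [mul_left_comm, ← exp_add]; simp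

theorem stmt_13_general (a : ℝ)
    (Φ : Matrix (Fin 2) (Fin 2) ℂ →ₗ[ℂ] Matrix (Fin 2) (Fin 2) ℂ) (hΦ : IsDephasing a Φ)
    (E : ℝ) (δ : ℝ) :
    sSup {r | ∃ ρ₀ ρ₁ : Matrix (Fin 2) (Fin 2) ℂ, IsDensity ρ₀ ∧ IsDensity ρ₁ ∧
        ((ρ₀ * pauli3).trace).re ≤ E ∧ ((ρ₁ * pauli3).trace).re ≤ E ∧
        traceNorm (ρ₀ - ρ₁) ≤ δ ∧ r = traceNorm (Φ ρ₀ - Φ ρ₁)} =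
      sSup {r | ∃ ρ₀ ρ₁ : Matrix (Fin 2) (Fin 2) ℂ, IsDensity ρ₀ ∧ IsDensity ρ₁ ∧
        ((ρ₀ * pauli3).trace).re ≤ E ∧ ((ρ₁ * pauli3).trace).re ≤ E ∧
        traceNorm (ρ₀ - ρ₁) ≤ δ ∧ (pauli2 * ρ₁).trace = 0 ∧
        r = traceNorm (Φ ρ₀ - Φ ρ₁)} := by
  congr 1
  ext r
  constructor
  · rintro ⟨ρ₀, ρ₁, h₀, h₁, e₀, e₁, hd, rfl⟩
    set U := phaseUnitary (-arg (ρ₁ 0 1))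
    have hU := commute_phaseUnitary_pauli3 (-arg (ρ₁ 0 1))
    refine ⟨conjStarAlgAut ℂ _ U ρ₀, conjStarAlgAut ℂ _ U ρ₁, h₀.conjStarAlgAut U,
      h₁.conjStarAlgAut U, ?_, ?_, ?_, ?_, ?_⟩
    · rwa [trace_conjStarAlgAut_mul_of_commute U hU]
    · rwa [trace_conjStarAlgAut_mul_of_commute U hU]
    · rwa [← map_sub, traceNorm_conjStarAlgAut]
    · refine trace_pauli2_mul_eq_zero (h₁.conjStarAlgAut U).1.1 ?_
      rw [conjStarAlgAut_phaseUnitary_apply_zero_one, ofReal_neg, exp_neg_arg_mul_I_mul, ofReal_im]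
    · rw [hΦ.map_conjStarAlgAut_phaseUnitary, hΦ.map_conjStarAlgAut_phaseUnitary,
        ← map_sub (conjStarAlgAut ℂ _ U), traceNorm_conjStarAlgAut]
  · rintro ⟨ρ₀, ρ₁, h₀, h₁, e₀, e₁, hd, -, hr⟩
    exact ⟨ρ₀, ρ₁, h₀, h₁, e₀, e₁, hd, hr⟩

/-- For the dephasing channel with Hamiltonian `H = σ₃`, the supremum defining the Dobrushin
curve `F_E(δ)` is unchanged when restricted to pairs whose second state lies in the
`(σ₁,σ₃)`-plane, i.e. satisfies `tr(σ₂ρ₁) = 0`. -/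
theorem stmt_13 (a : ℝ) (ha : a ∈ Set.Icc (0 : ℝ) 1)
    (Φ : Matrix (Fin 2) (Fin 2) ℂ →ₗ[ℂ] Matrix (Fin 2) (Fin 2) ℂ) (hΦ : IsDephasing a Φ)
    (E : ℝ) (δ : ℝ) (hδ : δ ∈ Set.Icc (0 : ℝ) 2) :
    sSup {r | ∃ ρ₀ ρ₁ : Matrix (Fin 2) (Fin 2) ℂ, IsDensity ρ₀ ∧ IsDensity ρ₁ ∧
        ((ρ₀ * pauli3).trace).re ≤ E ∧ ((ρ₁ * pauli3).trace).re ≤ E ∧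
        traceNorm (ρ₀ - ρ₁) ≤ δ ∧ r = traceNorm (Φ ρ₀ - Φ ρ₁)} =
      sSup {r | ∃ ρ₀ ρ₁ : Matrix (Fin 2) (Fin 2) ℂ, IsDensity ρ₀ ∧ IsDensity ρ₁ ∧
        ((ρ₀ * pauli3).trace).re ≤ E ∧ ((ρ₁ * pauli3).trace).re ≤ E ∧
        traceNorm (ρ₀ - ρ₁) ≤ δ ∧ (pauli2 * ρ₁).trace = 0 ∧
        r = traceNorm (Φ ρ₀ - Φ ρ₁)} :=
  stmt_13_general a Φ hΦ E δ
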